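/- arXiv:1107.0425 — 5 statements merged into one kernel-verified Lean document; each statement's English description precedes it below -/
import Mathlib

section
/- The function d(⟨α,f⟩, ⟨β,g⟩) = α + β − 2·min{α, β, c(f,g)} is well-defined on equivalence classes: if (α,f) ∼ (γ,u) and (β,g) ∼ (δ,v) then min{α, β, c(f,g)} = min{γ, δ, c(u,v)}. -/
/-!
Put `m = min α β = min γ δ`. Both sides equal `min m (c f g)` resp. `min m (c u v)`, and the
equivalences give `m ≤ c f u`, `m ≤ c g v`. If `c f g < m`, the isosceles property moves the
product along both equivalences, `c f g = c u g = c u v`; symmetrically if `c u v < m`; otherwise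
both minima are `m`. Symmetry of `c` comes from `2 • c x y = l x + l y - l (x⁻¹ * y)` and
`l x⁻¹ = l x`, since an ordered group is torsion-free.
-/

theorem comm_of_two_nsmul_eq {Λ : Type*} [AddCommGroup Λ] [LinearOrder Λ]
    [IsOrderedAddMonoid Λ] {G : Type*} [Group G] {l : G → Λ} {c : G → G → Λ}
    (hc : ∀ x y, 2 • c x y = l x + l y - l (x⁻¹ * y)) (hl_inv : ∀ x, l x⁻¹ = l x)
    (x y : G) : c x y = c y x := by
  have hl : l (x⁻¹ * y) = l (y⁻¹ * x) := by
    rw [← hl_inv, mul_inv_rev, inv_inv]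
  apply nsmul_right_injective (two_ne_zero : (2 : ℕ) ≠ 0)
  simp only [hc, hl, add_comm (l x)]

section Isosceles

variable {Λ : Type*} [LinearOrder Λ] {G : Type*} {c : G → G → Λ}

theorem isosceles_eq_of_lt_of_le_of_le (hcomm : ∀ x y, c x y = c y x)
    (hiso : ∀ x y z, c x z < c x y → c x z = c y z)
    {m : Λ} {f g u v : G} (hfu : m ≤ c f u) (hgv : m ≤ c g v) (hfg : c f g < m) :
    c u v = c f g := by
  have hug : c f g = c u g := hiso f u g (hfg.trans_le hfu)
  have hvu : c g u = c v u := hiso g v u (by rw [hcomm g u, ← hug]; exact hfg.trans_le hgv)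
  rw [hcomm u v, ← hvu, hcomm g u, ← hug]

theorem isosceles_min_eq_min_of_le_of_le (hcomm : ∀ x y, c x y = c y x)
    (hiso : ∀ x y z, c x z < c x y → c x z = c y z)
    {m : Λ} {f g u v : G} (hfu : m ≤ c f u) (hgv : m ≤ c g v) :
    min m (c f g) = min m (c u v) := by
  rcases lt_or_ge (c f g) m with hfg | hfg
  · rw [isosceles_eq_of_lt_of_le_of_le hcomm hiso hfu hgv hfg]
  rcases lt_or_ge (c u v) m with huv | huv
  · rw [isosceles_eq_of_lt_of_le_of_le hcomm hiso (hcomm u f ▸ hfu) (hcomm v g ▸ hgv) huv]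
  · rw [min_eq_left hfg, min_eq_left huv]

end Isosceles

theorem universal_tree_metric_well_defined_general {Λ : Type*} [AddCommGroup Λ] [LinearOrder Λ] [IsOrderedAddMonoid Λ]
    {G : Type*} [Group G] (l : G → Λ) (c : G → G → Λ)
    (hc : ∀ x y, 2 • c x y = l x + l y - l (x⁻¹ * y))
    (hL2 : ∀ x, l x⁻¹ = l x)
    (hL3 : ∀ x y z, c x z < c x y → c x z = c y z) :
    ∀ (α β γ δ : Λ) (f g u v : G),
      0 ≤ α → α ≤ l f → 0 ≤ β → β ≤ l g →
      0 ≤ γ → γ ≤ l u → 0 ≤ δ → δ ≤ l v →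
      α = γ → α ≤ c f u → β = δ → β ≤ c g v →
      min α (min β (c f g)) = min γ (min δ (c u v)) := by
  rintro α β _ _ f g u v - - - - - - - - rfl hfu rfl hgv
  rw [← min_assoc, ← min_assoc]
  exact isosceles_min_eq_min_of_le_of_le (comm_of_two_nsmul_eq hc hL2) hL3
    ((min_le_left α β).trans hfu) ((min_le_right α β).trans hgv)

/-- The function `d(⟨α,f⟩, ⟨β,g⟩) = α + β − 2·min{α, β, c(f,g)}` is
well-defined on equivalence classes: if `(α,f) ∼ (γ,u)` and `(β,g) ∼ (δ,v)` then
`min{α, β, c(f,g)} = min{γ, δ, c(u,v)}`. -/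
theorem universal_tree_metric_well_defined {Λ : Type*} [AddCommGroup Λ] [LinearOrder Λ] [IsOrderedAddMonoid Λ]
    {G : Type*} [Group G] (l : G → Λ) (c : G → G → Λ)
    (hc : ∀ x y, 2 • c x y = l x + l y - l (x⁻¹ * y))
    (hL1 : ∀ x, 0 ≤ l x) (hL1' : l 1 = 0)
    (hL2 : ∀ x, l x⁻¹ = l x)
    (hL3 : ∀ x y z, c x z < c x y → c x z = c y z) :
    ∀ (α β γ δ : Λ) (f g u v : G),
      0 ≤ α → α ≤ l f → 0 ≤ β → β ≤ l g →
      0 ≤ γ → γ ≤ l u → 0 ≤ δ → δ ≤ l v →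
      α = γ → α ≤ c f u → β = δ → β ≤ c g v →
      min α (min β (c f g)) = min γ (min δ (c u v)) :=
  universal_tree_metric_well_defined_general l c hc hL2 hL3
end

section
/- The function d(⟨α,f⟩, ⟨β,g⟩) = α + β − 2·min{α, β, c(f,g)} on Γ_G = S_G/∼ is a Λ-metric: it is nonnegative, symmetric, vanishes exactly on the diagonal, and satisfies the triangle inequality. -/
/-!
Writing `m = min α (min β k)` with `k = c(f,g)`, the distance is `(α - m) + (β - m)`, a sum of
two nonnegative terms; it vanishes iff `α = β = m`, i.e. iff `α = β ≤ k`. For the triangle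
inequality through `⟨γ,h⟩`, let `A = min α (min γ c(f,h))` and `B = min β (min γ c(g,h))`.
Then `max A B ≤ γ`, and `min A B ≤ m` because `c` is `0`-hyperbolic:
`min (c(f,h), c(g,h)) ≤ c(f,g)`. Hence `A + B = min A B + max A B ≤ m + γ`, which is the triangle
inequality after doubling.
-/

lemma add_sub_two_nsmul_min_eq {Λ : Type*} [AddCommGroup Λ] [LinearOrder Λ] (a b k : Λ) :
    a + b - 2 • min a (min b k) = (a - min a (min b k)) + (b - min a (min b k)) := by
  rw [two_nsmul]
  abel

section TreeDistance

variable {Λ : Type*} [AddCommGroup Λ] [LinearOrder Λ] [IsOrderedAddMonoid Λ]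

lemma add_sub_two_nsmul_min_nonneg (a b k : Λ) : 0 ≤ a + b - 2 • min a (min b k) := by
  rw [add_sub_two_nsmul_min_eq]
  exact add_nonneg (sub_nonneg.2 (min_le_left _ _))
    (sub_nonneg.2 ((min_le_right _ _).trans (min_le_left _ _)))

lemma add_sub_two_nsmul_min_eq_zero_iff (a b k : Λ) :
    a + b - 2 • min a (min b k) = 0 ↔ a = b ∧ a ≤ k := by
  constructor
  · intro h
    rw [add_sub_two_nsmul_min_eq, add_eq_zero_iff_of_nonneg (sub_nonneg.2 (min_le_left _ _))
      (sub_nonneg.2 ((min_le_right _ _).trans (min_le_left _ _))), sub_eq_zero, sub_eq_zero] at h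
    obtain ⟨ha, hb⟩ := h
    exact ⟨ha.trans hb.symm, ha.le.trans ((min_le_right _ _).trans (min_le_right _ _))⟩
  · rintro ⟨rfl, hak⟩
    rw [min_eq_left (le_min le_rfl hak), two_nsmul, sub_self]

lemma add_sub_two_nsmul_min_le_add {k₁ k₂ k : Λ} (hk : min k₁ k₂ ≤ k) (a b e : Λ) :
    a + b - 2 • min a (min b k) ≤
      (a + e - 2 • min a (min e k₁)) + (b + e - 2 • min b (min e k₂)) := by
  set A := min a (min e k₁)
  set B := min b (min e k₂)
  set M := min a (min b k)
  have hmin : min A B ≤ M :=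
    le_min ((min_le_left _ _).trans (min_le_left _ _))
      (le_min ((min_le_right _ _).trans (min_le_left _ _))
        (le_trans (min_le_min ((min_le_right _ _).trans (min_le_right _ _))
          ((min_le_right _ _).trans (min_le_right _ _))) hk))
  have hmax : max A B ≤ e :=
    max_le ((min_le_right _ _).trans (min_le_left _ _)) ((min_le_right _ _).trans (min_le_left _ _))
  have hAB : A + B ≤ M + e := by
    rw [← min_add_max A B]
    exact add_le_add hmin hmax
  rw [← sub_nonneg]
  have hdiff : (a + e - 2 • A) + (b + e - 2 • B) - (a + b - 2 • M) = 2 • (M + e - (A + B)) := by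
    abel
  rw [hdiff]
  exact nsmul_nonneg (sub_nonneg.2 hAB) 2

lemma gromovProduct_comm {G : Type*} [Group G] {l : G → Λ} {c : G → G → Λ}
    (hc : ∀ x y, 2 • c x y = l x + l y - l (x⁻¹ * y)) (hinv : ∀ x, l x⁻¹ = l x) (x y : G) :
    c x y = c y x := by
  apply nsmul_right_injective two_ne_zero
  change 2 • c x y = 2 • c y x
  rw [hc, hc, ← hinv (x⁻¹ * y), mul_inv_rev, inv_inv, add_comm (l x)]

end TreeDistance

lemma min_le_of_lt_imp_eq {Λ α : Type*} [LinearOrder Λ] {c : α → α → Λ}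
    (hcomm : ∀ x y, c x y = c y x) (hiso : ∀ x y z, c x z < c x y → c x z = c y z) (x y z : α) :
    min (c x z) (c y z) ≤ c x y := by
  by_contra! h
  rw [lt_min_iff] at h
  exact (hcomm z y ▸ hiso x z y h.1 ▸ h.2).false

theorem universal_tree_metric_general {Λ : Type*} [AddCommGroup Λ] [LinearOrder Λ] [IsOrderedAddMonoid Λ]
    {G : Type*} [Group G] (l : G → Λ) (c : G → G → Λ)
    (hc : ∀ x y, 2 • c x y = l x + l y - l (x⁻¹ * y))
    (hL2 : ∀ x, l x⁻¹ = l x)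
    (hL3 : ∀ x y z, c x z < c x y → c x z = c y z)
    (d : Λ × G → Λ × G → Λ)
    (hd : ∀ p q : Λ × G, d p q = p.1 + q.1 - 2 • min p.1 (min q.1 (c p.2 q.2))) :
    ∀ p q r : Λ × G,
      0 ≤ p.1 → p.1 ≤ l p.2 → 0 ≤ q.1 → q.1 ≤ l q.2 → 0 ≤ r.1 → r.1 ≤ l r.2 →
      (0 ≤ d p q) ∧
      (d p q = d q p) ∧
      (d p q = 0 ↔ (p.1 = q.1 ∧ p.1 ≤ c p.2 q.2)) ∧
      (d p q ≤ d p r + d q r) := by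
  have hcomm := gromovProduct_comm hc hL2
  intro p q r _ _ _ _ _ _
  simp only [hd]
  refine ⟨add_sub_two_nsmul_min_nonneg _ _ _, ?_, add_sub_two_nsmul_min_eq_zero_iff _ _ _,
    add_sub_two_nsmul_min_le_add (min_le_of_lt_imp_eq hcomm hL3 p.2 q.2 r.2) _ _ _⟩
  rw [hcomm q.2 p.2, min_left_comm, add_comm]

/-- The function `d(⟨α,f⟩, ⟨β,g⟩) = α + β − 2·min{α, β, c(f,g)}` on
`Γ_G = S_G/∼` is a `Λ`-metric: it is nonnegative (M1), symmetric (M3), vanishes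
exactly on the diagonal of the quotient, i.e. `d p q = 0` iff `p ∼ q` (M2), and
satisfies the triangle inequality (M4). Points of `Γ_G` are represented by pairs
`(α, f)` with `0 ≤ α ≤ l f`, and `(α,f) ∼ (β,g)` iff `α = β ≤ c(f,g)`. -/
theorem universal_tree_metric {Λ : Type*} [AddCommGroup Λ] [LinearOrder Λ] [IsOrderedAddMonoid Λ]
    {G : Type*} [Group G] (l : G → Λ) (c : G → G → Λ)
    (hc : ∀ x y, 2 • c x y = l x + l y - l (x⁻¹ * y))
    (hL1 : ∀ x, 0 ≤ l x) (hL1' : l 1 = 0)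
    (hL2 : ∀ x, l x⁻¹ = l x)
    (hL3 : ∀ x y z, c x z < c x y → c x z = c y z)
    (d : Λ × G → Λ × G → Λ)
    (hd : ∀ p q : Λ × G, d p q = p.1 + q.1 - 2 • min p.1 (min q.1 (c p.2 q.2))) :
    ∀ p q r : Λ × G,
      0 ≤ p.1 → p.1 ≤ l p.2 → 0 ≤ q.1 → q.1 ≤ l q.2 → 0 ≤ r.1 → r.1 ≤ l r.2 →
      (0 ≤ d p q) ∧
      (d p q = d q p) ∧
      (d p q = 0 ↔ (p.1 = q.1 ∧ p.1 ≤ c p.2 q.2)) ∧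
      (d p q ≤ d p r + d q r) :=
  universal_tree_metric_general l c hc hL2 hL3 d hd
end

section
/- If (a₁,a₂,a₃) and (b₁,b₂,b₃) are isosceles triples in a linearly ordered abelian group, then the triple (min{a₁,b₁}, min{a₂,b₂}, min{a₃,b₃}) is isosceles. -/
theorem min_min_le_min_of_min_le {α : Type*} [LinearOrder α] {a b c a' b' c' : α}
    (h : min b c ≤ a) (h' : min b' c' ≤ a') : min (min b b') (min c c') ≤ min a a' :=
  min_min_min_comm b b' c c' ▸ min_le_min h h'

theorem min_of_isosceles_triples_isosceles_general {Λ : Type*} [LinearOrder Λ]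
    (a₁ a₂ a₃ b₁ b₂ b₃ : Λ)
    (ha : min a₂ a₃ ≤ a₁ ∧ min a₁ a₃ ≤ a₂ ∧ min a₁ a₂ ≤ a₃)
    (hb : min b₂ b₃ ≤ b₁ ∧ min b₁ b₃ ≤ b₂ ∧ min b₁ b₂ ≤ b₃) :
    min (min a₂ b₂) (min a₃ b₃) ≤ min a₁ b₁ ∧
    min (min a₁ b₁) (min a₃ b₃) ≤ min a₂ b₂ ∧
    min (min a₁ b₁) (min a₂ b₂) ≤ min a₃ b₃ :=
  ⟨min_min_le_min_of_min_le ha.1 hb.1, min_min_le_min_of_min_le ha.2.1 hb.2.1,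
    min_min_le_min_of_min_le ha.2.2 hb.2.2⟩

/-- If `(a₁,a₂,a₃)` and `(b₁,b₂,b₃)` are isosceles triples in a linearly
ordered abelian group (each entry is `≥` the minimum of the other two), then the triple
`(min{a₁,b₁}, min{a₂,b₂}, min{a₃,b₃})` is isosceles. -/
theorem min_of_isosceles_triples_isosceles {Λ : Type*} [AddCommGroup Λ] [LinearOrder Λ]
    [IsOrderedAddMonoid Λ]
    (a₁ a₂ a₃ b₁ b₂ b₃ : Λ)
    (ha : min a₂ a₃ ≤ a₁ ∧ min a₁ a₃ ≤ a₂ ∧ min a₁ a₂ ≤ a₃)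
    (hb : min b₂ b₃ ≤ b₁ ∧ min b₁ b₃ ≤ b₂ ∧ min b₁ b₂ ≤ b₃) :
    min (min a₂ b₂) (min a₃ b₃) ≤ min a₁ b₁ ∧
    min (min a₁ b₁) (min a₃ b₃) ≤ min a₂ b₂ ∧
    min (min a₁ b₁) (min a₂ b₂) ≤ min a₃ b₃ :=
  min_of_isosceles_triples_isosceles_general a₁ a₂ a₃ b₁ b₂ b₃ ha hb
end

section
/- The Λ-metric space (Γ_G, d) is 0-hyperbolic with respect to the basepoint ε = ⟨0,1⟩: for all points p, q, r ∈ Γ_G, the triple of Gromov products ((p·q)_ε, (p·r)_ε, (q·r)_ε) is isosceles. -/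
/-!
Since `c 1 f = 0`, the distance from `ε` to `⟨α,f⟩` is `α`, so `(⟨α,f⟩·⟨β,g⟩)_ε = min α (min β (c f g))`.
Lyndon's axiom `c f h < c f g → c f h = c g h`, with the symmetry of `c`, gives the ultrametric
inequality `min (c f h) (c g h) ≤ c f g`; taking minima with the heights `α, β` preserves it, and
for the three Gromov products this inequality is the isosceles property.
-/

section Ultrametric

variable {X Λ : Type*} [LinearOrder Λ] {c : X → X → Λ}

theorem min_le_of_lt_imp_eq_s9 (hsymm : ∀ x y, c x y = c y x)
    (h : ∀ x y z, c x z < c x y → c x z = c y z) (x y z : X) :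
    min (c x z) (c y z) ≤ c x y := by
  by_contra! hlt
  rw [lt_min_iff] at hlt
  have heq : c x y = c z y := h x z y hlt.1
  rw [hsymm z y] at heq
  exact hlt.2.ne heq

def minProduct (f : X → Λ) (c : X → X → Λ) (x y : X) : Λ :=
  min (f x) (min (f y) (c x y))

theorem minProduct_comm (f : X → Λ) (hsymm : ∀ x y, c x y = c y x) (x y : X) :
    minProduct f c x y = minProduct f c y x := by
  rw [minProduct, minProduct, hsymm, min_left_comm]

theorem min_minProduct_le (f : X → Λ) {x y z : X} (h : min (c x z) (c y z) ≤ c x y) :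
    min (minProduct f c x z) (minProduct f c y z) ≤ minProduct f c x y :=
  le_min ((min_le_left _ _).trans (min_le_left _ _))
    (le_min ((min_le_right _ _).trans (min_le_left _ _))
      ((min_le_min ((min_le_right _ _).trans (min_le_right _ _))
        ((min_le_right _ _).trans (min_le_right _ _))).trans h))

theorem minProduct_isosceles (f : X → Λ) (hsymm : ∀ x y, c x y = c y x)
    (hultra : ∀ x y z, min (c x z) (c y z) ≤ c x y) (x y z : X) :
    min (minProduct f c x z) (minProduct f c y z) ≤ minProduct f c x y ∧
      min (minProduct f c x y) (minProduct f c y z) ≤ minProduct f c x z ∧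
      min (minProduct f c x y) (minProduct f c x z) ≤ minProduct f c y z := by
  have hcomm := minProduct_comm f hsymm
  refine ⟨min_minProduct_le f (hultra x y z), ?_, ?_⟩
  · simpa only [hcomm z y] using min_minProduct_le f (hultra x z y)
  · simpa only [hcomm y x, hcomm z x] using min_minProduct_le f (hultra y z x)

end Ultrametric

section LyndonLength

variable {Λ : Type*} [AddCommGroup Λ] [LinearOrder Λ] [IsOrderedAddMonoid Λ]
  {G : Type*} [Group G] {l : G → Λ} {c : G → G → Λ}

theorem lyndonProduct_one_left (hc : ∀ x y, 2 • c x y = l x + l y - l (x⁻¹ * y))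
    (hl : l 1 = 0) (x : G) : c 1 x = 0 :=
  nsmul_right_injective two_ne_zero <| by
    dsimp only
    rw [hc, hl, inv_one, one_mul, smul_zero, zero_add, sub_self]

theorem lyndonProduct_comm (hc : ∀ x y, 2 • c x y = l x + l y - l (x⁻¹ * y))
    (hinv : ∀ x, l x⁻¹ = l x) (x y : G) : c x y = c y x :=
  nsmul_right_injective two_ne_zero <| by
    dsimp only
    rw [hc, hc, add_comm (l x), ← hinv (y⁻¹ * x), mul_inv_rev, inv_inv]

theorem gromovProduct_eq_min (hc1 : ∀ x, c 1 x = 0) {d gp : Λ × G → Λ × G → Λ}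
    (hd : ∀ p q : Λ × G, d p q = p.1 + q.1 - 2 • min p.1 (min q.1 (c p.2 q.2)))
    (hgp : ∀ p q : Λ × G, 2 • gp p q = d (0, 1) p + d (0, 1) q - d p q)
    {p q : Λ × G} (hp : 0 ≤ p.1) (hq : 0 ≤ q.1) :
    gp p q = min p.1 (min q.1 (c p.2 q.2)) := by
  have hbase : ∀ r : Λ × G, 0 ≤ r.1 → d (0, 1) r = r.1 := fun r hr => by
    simp [hd, hc1, min_eq_right hr]
  refine nsmul_right_injective two_ne_zero ?_
  dsimp only
  rw [hgp, hbase p hp, hbase q hq, hd, sub_sub_cancel]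

end LyndonLength

theorem universal_tree_zero_hyperbolic_general {Λ : Type*} [AddCommGroup Λ] [LinearOrder Λ] [IsOrderedAddMonoid Λ]
    {G : Type*} [Group G] (l : G → Λ) (c : G → G → Λ)
    (hc : ∀ x y, 2 • c x y = l x + l y - l (x⁻¹ * y))
    (hL1' : l 1 = 0)
    (hL2 : ∀ x, l x⁻¹ = l x)
    (hL3 : ∀ x y z, c x z < c x y → c x z = c y z)
    (d : Λ × G → Λ × G → Λ)
    (hd : ∀ p q : Λ × G, d p q = p.1 + q.1 - 2 • min p.1 (min q.1 (c p.2 q.2)))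
    (gp : Λ × G → Λ × G → Λ)
    (hgp : ∀ p q : Λ × G, 2 • gp p q = d ((0 : Λ), (1 : G)) p + d ((0 : Λ), (1 : G)) q - d p q) :
    ∀ p q r : Λ × G,
      0 ≤ p.1 → p.1 ≤ l p.2 → 0 ≤ q.1 → q.1 ≤ l q.2 → 0 ≤ r.1 → r.1 ≤ l r.2 →
      min (gp p r) (gp q r) ≤ gp p q ∧
      min (gp p q) (gp q r) ≤ gp p r ∧
      min (gp p q) (gp p r) ≤ gp q r := by
  intro p q r hp _ hq _ hr _
  have hsymm := lyndonProduct_comm hc hL2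
  have hgp_eq {x y : Λ × G} (hx : 0 ≤ x.1) (hy : 0 ≤ y.1) :=
    gromovProduct_eq_min (lyndonProduct_one_left hc hL1') hd hgp hx hy
  rw [hgp_eq hp hq, hgp_eq hp hr, hgp_eq hq hr]
  exact minProduct_isosceles (fun x : Λ × G => x.1) (fun x y => hsymm x.2 y.2)
    (fun x y z => min_le_of_lt_imp_eq_s9 hsymm hL3 x.2 y.2 z.2) p q r

/-- The `Λ`-metric space `(Γ_G, d)` is `0`-hyperbolic with respect to
the basepoint `ε = ⟨0,1⟩`: for all points `p, q, r ∈ Γ_G` the triple of Gromov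
products `((p·q)_ε, (p·r)_ε, (q·r)_ε)` is isosceles (its minimum is attained at
least twice).  Points of `Γ_G` are represented by pairs `(α,f)` with `0 ≤ α ≤ l f`,
`d` is the universal tree metric, and `gp p q` denotes `(p·q)_ε`, determined by
`2 • gp p q = d ε p + d ε q - d p q`. -/
theorem universal_tree_zero_hyperbolic {Λ : Type*} [AddCommGroup Λ] [LinearOrder Λ] [IsOrderedAddMonoid Λ]
    {G : Type*} [Group G] (l : G → Λ) (c : G → G → Λ)
    (hc : ∀ x y, 2 • c x y = l x + l y - l (x⁻¹ * y))
    (hL1 : ∀ x, 0 ≤ l x) (hL1' : l 1 = 0)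
    (hL2 : ∀ x, l x⁻¹ = l x)
    (hL3 : ∀ x y z, c x z < c x y → c x z = c y z)
    (d : Λ × G → Λ × G → Λ)
    (hd : ∀ p q : Λ × G, d p q = p.1 + q.1 - 2 • min p.1 (min q.1 (c p.2 q.2)))
    (gp : Λ × G → Λ × G → Λ)
    (hgp : ∀ p q : Λ × G, 2 • gp p q = d ((0 : Λ), (1 : G)) p + d ((0 : Λ), (1 : G)) q - d p q) :
    ∀ p q r : Λ × G,
      0 ≤ p.1 → p.1 ≤ l p.2 → 0 ≤ q.1 → q.1 ≤ l q.2 → 0 ≤ r.1 → r.1 ≤ l r.2 →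
      min (gp p r) (gp q r) ≤ gp p q ∧
      min (gp p q) (gp q r) ≤ gp p r ∧
      min (gp p q) (gp p r) ≤ gp q r :=
  universal_tree_zero_hyperbolic_general l c hc hL1' hL2 hL3 d hd gp hgp
end

section
/- The map f · ⟨α, g⟩ = ⟨|f| + α − 2min{α, c(f⁻¹,g)}, f⟩ if α ≤ c(f⁻¹,g), and f · ⟨α, g⟩ = ⟨|f| + α − 2c(f⁻¹,g), f * g⟩ if α > c(f⁻¹,g), is well-defined on Γ_G: if (α,g) ∼ (α₁,g₁) then f·⟨α,g⟩ = f·⟨α₁,g₁⟩. -/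
/-!
Since `α ≤ c(g, g₁)`, the isosceles property of the Gromov product puts `c(f⁻¹, g)` and
`c(f⁻¹, g₁)` on the same side of `α`, and makes them equal when they lie below it.
In the first case both images are the point at distance `|f| - α` on the segment `[1, f]`.
In the second, the identity `c(fg, fg₁) = |f| - c(f⁻¹, g) - c(f⁻¹, g₁) + c(g, g₁)` shows that the
two images are identified.
-/

section GromovProduct

variable {Λ G : Type*} {l : G → Λ} {c : G → G → Λ}

theorem gromov_comm [AddCommGroup Λ] [LinearOrder Λ] [IsOrderedAddMonoid Λ] [Group G]
    (hc : ∀ x y, 2 • c x y = l x + l y - l (x⁻¹ * y))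
    (hinv : ∀ x, l x⁻¹ = l x) (x y : G) : c x y = c y x := by
  apply nsmul_right_injective two_ne_zero
  beta_reduce
  rw [hc, hc, ← hinv (y⁻¹ * x), mul_inv_rev, inv_inv, add_comm (l x)]

theorem gromov_self [AddCommGroup Λ] [LinearOrder Λ] [IsOrderedAddMonoid Λ] [Group G]
    (hc : ∀ x y, 2 • c x y = l x + l y - l (x⁻¹ * y)) (hone : l 1 = 0)
    (x : G) : c x x = l x := by
  apply nsmul_right_injective two_ne_zero
  beta_reduce
  rw [hc, inv_mul_cancel, hone, sub_zero, two_nsmul]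

theorem length_mul_eq [AddCommGroup Λ] [Group G]
    (hc : ∀ x y, 2 • c x y = l x + l y - l (x⁻¹ * y))
    (hinv : ∀ x, l x⁻¹ = l x) (f g : G) : l (f * g) = l f + l g - 2 • c f⁻¹ g := by
  rw [hc, hinv, inv_inv]
  abel

theorem gromov_mul_left [AddCommGroup Λ] [LinearOrder Λ] [IsOrderedAddMonoid Λ] [Group G]
    (hc : ∀ x y, 2 • c x y = l x + l y - l (x⁻¹ * y))
    (hinv : ∀ x, l x⁻¹ = l x) (f g g₁ : G) :
    c (f * g) (f * g₁) = l f - c f⁻¹ g - c f⁻¹ g₁ + c g g₁ := by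
  apply nsmul_right_injective two_ne_zero
  beta_reduce
  have hcancel : (f * g)⁻¹ * (f * g₁) = g⁻¹ * g₁ := by group
  rw [hc, hcancel, length_mul_eq hc hinv, length_mul_eq hc hinv, nsmul_add, hc g g₁]
  simp only [nsmul_sub]
  abel

theorem gromov_eq_of_lt_of_le [LinearOrder Λ]
    (hcomm : ∀ x y, c x y = c y x)
    (hiso : ∀ x y z, c x z < c x y → c x z = c y z) {x g g₁ : G} {α : Λ}
    (hlt : c x g < α) (hα : α ≤ c g g₁) : c x g = c x g₁ := by
  rw [hcomm x g, hcomm x g₁]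
  exact hiso g g₁ x (hcomm x g ▸ hlt.trans_le hα)

theorem le_gromov_iff_of_le_gromov [LinearOrder Λ]
    (hcomm : ∀ x y, c x y = c y x)
    (hiso : ∀ x y z, c x z < c x y → c x z = c y z) {x g g₁ : G} {α : Λ}
    (hα : α ≤ c g g₁) : α ≤ c x g ↔ α ≤ c x g₁ := by
  have key : ∀ {g g₁ : G}, α ≤ c g g₁ → α ≤ c x g → α ≤ c x g₁ := by
    intro g g₁ hα h
    by_contra! hlt
    rw [hcomm g g₁] at hα
    exact (gromov_eq_of_lt_of_le hcomm hiso hlt hα ▸ hlt).not_ge h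
  exact ⟨key hα, key (hcomm g g₁ ▸ hα)⟩

end GromovProduct

theorem universal_tree_action_well_defined_general {Λ : Type*} [AddCommGroup Λ] [LinearOrder Λ]
    [IsOrderedAddMonoid Λ]
    {G : Type*} [Group G] (l : G → Λ) (c : G → G → Λ)
    (hc : ∀ x y, 2 • c x y = l x + l y - l (x⁻¹ * y))
    (hL1' : l 1 = 0)
    (hL2 : ∀ x, l x⁻¹ = l x)
    (hL3 : ∀ x y z, c x z < c x y → c x z = c y z)
    (act : G → Λ × G → Λ × G)
    (hact : ∀ (f : G) (p : Λ × G), act f p =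
      if p.1 ≤ c f⁻¹ p.2 then (l f + p.1 - 2 • min p.1 (c f⁻¹ p.2), f)
      else (l f + p.1 - 2 • c f⁻¹ p.2, f * p.2)) :
    ∀ (f g g₁ : G) (α α₁ : Λ),
      0 ≤ α → α ≤ l g → 0 ≤ α₁ → α₁ ≤ l g₁ →
      α = α₁ → α ≤ c g g₁ →
      (act f (α, g)).1 = (act f (α₁, g₁)).1 ∧
        (act f (α, g)).1 ≤ c (act f (α, g)).2 (act f (α₁, g₁)).2 := by
  intro f g g₁ α _ hα0 _ _ _ rfl hα
  have hcomm := gromov_comm hc hL2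
  rw [hact f (α, g), hact f (α, g₁)]
  by_cases h : α ≤ c f⁻¹ g
  · have h₁ : α ≤ c f⁻¹ g₁ := (le_gromov_iff_of_le_gromov hcomm hL3 hα).1 h
    simp only [if_pos h, if_pos h₁, min_eq_left h, min_eq_left h₁, gromov_self hc hL1', true_and]
    calc l f + α - 2 • α = l f - α := by abel
      _ ≤ l f := sub_le_self _ hα0
  · have h₁ : ¬ α ≤ c f⁻¹ g₁ := mt (le_gromov_iff_of_le_gromov hcomm hL3 hα).2 h
    have heq := gromov_eq_of_lt_of_le hcomm hL3 (not_le.1 h) hα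
    simp only [if_neg h₁, heq, true_and, gromov_mul_left hc hL2]
    calc l f + α - 2 • c f⁻¹ g₁ = l f - c f⁻¹ g₁ - c f⁻¹ g₁ + α := by abel
      _ ≤ l f - c f⁻¹ g₁ - c f⁻¹ g₁ + c g g₁ := by gcongr

/-- The map `f · ⟨α, g⟩ = ⟨|f| + α − 2min{α, c(f⁻¹,g)}, f⟩` if
`α ≤ c(f⁻¹,g)`, and `f · ⟨α, g⟩ = ⟨|f| + α − 2c(f⁻¹,g), f * g⟩` if `α > c(f⁻¹,g)`,
is well-defined on `Γ_G`: if `(α,g) ∼ (α₁,g₁)` then `f·⟨α,g⟩ = f·⟨α₁,g₁⟩`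
(i.e. the resulting pairs are again `∼`-equivalent).

Here `G ≤ CDR(Λ,X)` is abstracted (via Chiswell's theorem) as a group with a free
Lyndon length function `l : G → Λ` into a discretely ordered abelian group `Λ`,
with Gromov product `c` and with the reduced product `f * g` of infinite words
realized by the group multiplication. -/
theorem universal_tree_action_well_defined {Λ : Type*} [AddCommGroup Λ] [LinearOrder Λ]
    [IsOrderedAddMonoid Λ]
    [One Λ] (hone : (0 : Λ) < 1) (hdisc : ∀ e : Λ, 0 < e → (1 : Λ) ≤ e)
    {G : Type*} [Group G] (l : G → Λ) (c : G → G → Λ)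
    (hc : ∀ x y, 2 • c x y = l x + l y - l (x⁻¹ * y))
    (hL1 : ∀ x, 0 ≤ l x) (hL1' : l 1 = 0)
    (hL2 : ∀ x, l x⁻¹ = l x)
    (hL3 : ∀ x y z, c x z < c x y → c x z = c y z)
    (hfree : ∀ g : G, g ≠ 1 → l g < l (g * g))
    (act : G → Λ × G → Λ × G)
    (hact : ∀ (f : G) (p : Λ × G), act f p =
      if p.1 ≤ c f⁻¹ p.2 then (l f + p.1 - 2 • min p.1 (c f⁻¹ p.2), f)
      else (l f + p.1 - 2 • c f⁻¹ p.2, f * p.2)) :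
    ∀ (f g g₁ : G) (α α₁ : Λ),
      0 ≤ α → α ≤ l g → 0 ≤ α₁ → α₁ ≤ l g₁ →
      α = α₁ → α ≤ c g g₁ →
      (act f (α, g)).1 = (act f (α₁, g₁)).1 ∧
        (act f (α, g)).1 ≤ c (act f (α, g)).2 (act f (α₁, g₁)).2 :=
  universal_tree_action_well_defined_general l c hc hL1' hL2 hL3 act hact
end
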